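/- arXiv:2409.11761 — 2 statements merged into one kernel-verified Lean document; each statement's English description precedes it below -/
import Mathlib

section
/- Let 0 < λ₁ < λ₂ < … < λ_M be distinct positive real numbers and N > M a positive integer. Set λ₀ = 0. Then for each k ∈ {1,…,M} the equation (1/N)·∑_{j=1}^{M} λ_j/(λ_j − μ) = 1 has exactly one solution μ_k in the open interval (λ_{k−1}, λ_k), and the M numbers μ₁ < μ₂ < … < μ_M obtained this way are all of the real solutions of the equation; in particular 0 < μ₁ < λ₁ < μ₂ < λ₂ < … < μ_M < λ_M. -/
/-- The left endpoint of the `k`-th interval `(λ_{k−1}, λ_k)`, with the convention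
`λ₀ = 0`. -/
def prevEig {M : ℕ} (lam : Fin M → ℝ) (k : Fin M) : ℝ :=
  if _h : (k : ℕ) = 0 then 0
  else lam ⟨(k : ℕ) - 1, Nat.lt_of_le_of_lt (Nat.sub_le _ _) k.isLt⟩

/-!
On each interval `(λ_{k-1}, λ_k)` the sum `∑ⱼ λⱼ/(λⱼ - μ)` is continuous and strictly increasing,
because every term is. It tends to `+∞` as `μ → λ_k⁻`, and to `-∞` as `μ → λ_{k-1}⁺` (for `k = 1`
it equals `M < N` at `μ = 0`), so it takes the value `N` exactly once there. Conversely a root `μ`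
is positive, since for `μ ≤ 0` every term is at most `1`, and lies below some `λ_k`, since above
all of them every term is negative; the least such `λ_k` bounds the interval containing `μ`.
-/

open Filter Topology Set Function

theorem existsUnique_mem_Ioo_eq_of_strictMonoOn {α δ : Type*}
    [ConditionallyCompleteLinearOrder α] [TopologicalSpace α] [OrderTopology α]
    [DenselyOrdered α] [LinearOrder δ] [TopologicalSpace δ] [OrderClosedTopology δ]
    {f : α → δ} {a b : α} {c : δ} (hab : a < b) (hf : ContinuousOn f (Ioo a b))
    (hmono : StrictMonoOn f (Ioo a b)) (hlo : ∀ᶠ x in 𝓝[>] a, f x < c)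
    (hhi : ∀ᶠ x in 𝓝[<] b, c < f x) : ∃! x, x ∈ Ioo a b ∧ f x = c := by
  have := nhdsGT_neBot_of_exists_gt ⟨b, hab⟩
  have := nhdsLT_neBot_of_exists_lt ⟨a, hab⟩
  obtain ⟨x, hxc, hx⟩ := (hlo.and (Ioo_mem_nhdsGT hab)).exists
  obtain ⟨y, hyc, hy⟩ := (hhi.and (Ioo_mem_nhdsLT hab)).exists
  obtain ⟨z, hz, hzc⟩ := hf.surjOn_Icc hx hy ⟨hxc.le, hyc.le⟩
  exact ⟨z, ⟨hz, hzc⟩, fun w hw => hmono.injOn hw.1 hz (hw.2.trans hzc.symm)⟩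

theorem div_sub_lt_div_sub {c x y : ℝ} (hc : 0 < c) (hxy : x < y) (h : y < c ∨ c < x) :
    c / (c - x) < c / (c - y) := by
  rcases h with h | h
  · exact div_lt_div_of_pos_left hc (by linarith) (by linarith)
  · rw [← neg_sub x, ← neg_sub y, div_neg, div_neg, neg_lt_neg_iff]
    exact div_lt_div_of_pos_left hc (by linarith) (by linarith)

theorem tendsto_div_sub_nhdsLT {c : ℝ} (hc : 0 < c) :
    Tendsto (fun μ => c / (c - μ)) (𝓝[<] c) atTop := by
  have h : Tendsto (fun μ => c - μ) (𝓝[<] c) (𝓝[>] 0) := by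
    refine tendsto_nhdsWithin_iff.2 ⟨?_, eventually_nhdsWithin_of_forall fun μ hμ => ?_⟩
    · exact tendsto_nhdsWithin_of_tendsto_nhds (by simpa using (continuous_sub_left c).tendsto c)
    · exact sub_pos.2 (mem_Iio.1 hμ)
  exact (tendsto_inv_nhdsGT_zero.comp h).const_mul_atTop hc

theorem tendsto_div_sub_nhdsGT {c : ℝ} (hc : 0 < c) :
    Tendsto (fun μ => c / (c - μ)) (𝓝[>] c) atBot := by
  have h : Tendsto (fun μ => c - μ) (𝓝[>] c) (𝓝[<] 0) := by
    refine tendsto_nhdsWithin_iff.2 ⟨?_, eventually_nhdsWithin_of_forall fun μ hμ => ?_⟩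
    · exact tendsto_nhdsWithin_of_tendsto_nhds (by simpa using (continuous_sub_left c).tendsto c)
    · exact sub_neg.2 (mem_Ioi.1 hμ)
  exact (tendsto_inv_nhdsLT_zero.comp h).const_mul_atBot hc

section mestreSum

variable {ι : Type*} [Fintype ι] {lam : ι → ℝ} {μ : ℝ}

/-- `N` times the function `f` whose level set `f = 1` consists of Mestre's roots. -/
noncomputable def mestreSum (lam : ι → ℝ) (μ : ℝ) : ℝ := ∑ j, lam j / (lam j - μ)

theorem mestreSum_zero (hlam : ∀ j, lam j ≠ 0) : mestreSum lam 0 = Fintype.card ι := by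
  simp [mestreSum, hlam]

theorem mestreSum_le_card (hlam : ∀ j, 0 < lam j) (hμ : μ ≤ 0) :
    mestreSum lam μ ≤ Fintype.card ι := by
  rw [← nsmul_one, ← Finset.card_univ, ← Finset.sum_const]
  refine Finset.sum_le_sum fun j _ => ?_
  rw [div_le_one (by linarith [hlam j])]
  linarith

theorem mestreSum_nonpos (hlam : ∀ j, 0 ≤ lam j) (hμ : ∀ j, lam j < μ) :
    mestreSum lam μ ≤ 0 :=
  Finset.sum_nonpos fun j _ => div_nonpos_of_nonneg_of_nonpos (hlam j) (by linarith [hμ j])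

theorem continuousAt_mestreSum (hμ : ∀ j, lam j ≠ μ) : ContinuousAt (mestreSum lam) μ := by
  unfold mestreSum
  fun_prop (disch := exact sub_ne_zero.2 (hμ _))

theorem strictMonoOn_mestreSum [Nonempty ι] {s : Set ℝ} (hs : s.OrdConnected)
    (hlam : ∀ j, 0 < lam j) (hgap : ∀ j, lam j ∉ s) : StrictMonoOn (mestreSum lam) s := by
  intro x hx y hy hxy
  refine Finset.sum_lt_sum_of_nonempty Finset.univ_nonempty fun j _ => ?_
  refine div_sub_lt_div_sub (hlam j) hxy ?_
  by_contra! h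
  exact hgap j (hs.out hx hy ⟨h.2, h.1⟩)

theorem continuousOn_mestreSum {s : Set ℝ} (hgap : ∀ j, lam j ∉ s) :
    ContinuousOn (mestreSum lam) s :=
  fun _ hμ => (continuousAt_mestreSum (lam := lam) fun j h => hgap j (h ▸ hμ)).continuousWithinAt

theorem mestreSum_eq_add_sum_erase [DecidableEq ι] (k : ι) (μ : ℝ) :
    mestreSum lam μ = lam k / (lam k - μ) + ∑ j ∈ Finset.univ.erase k, lam j / (lam j - μ) :=
  (Finset.add_sum_erase _ _ (Finset.mem_univ k)).symm

theorem continuousAt_sum_erase (hlam : Injective lam) [DecidableEq ι] (k : ι) :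
    ContinuousAt (fun μ => ∑ j ∈ Finset.univ.erase k, lam j / (lam j - μ)) (lam k) := by
  refine tendsto_finsetSum _ fun j hj => ?_
  exact continuousAt_const.div (continuousAt_const.sub continuousAt_id)
    (sub_ne_zero.2 (hlam.ne (Finset.ne_of_mem_erase hj)))

theorem tendsto_mestreSum_nhdsLT (hlam : Injective lam) {k : ι} (hk : 0 < lam k) :
    Tendsto (mestreSum lam) (𝓝[<] lam k) atTop := by
  classical
  simp only [funext (mestreSum_eq_add_sum_erase (lam := lam) k)]
  exact (tendsto_div_sub_nhdsLT hk).atTop_add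
    ((continuousAt_sum_erase hlam k).tendsto.mono_left nhdsWithin_le_nhds)

theorem tendsto_mestreSum_nhdsGT (hlam : Injective lam) {k : ι} (hk : 0 < lam k) :
    Tendsto (mestreSum lam) (𝓝[>] lam k) atBot := by
  classical
  simp only [funext (mestreSum_eq_add_sum_erase (lam := lam) k)]
  exact (tendsto_div_sub_nhdsGT hk).atBot_add
    ((continuousAt_sum_erase hlam k).tendsto.mono_left nhdsWithin_le_nhds)

end mestreSum

section prevEig

variable {M : ℕ} {lam : Fin M → ℝ}

theorem prevEig_of_val_eq_zero {k : Fin M} (hk : (k : ℕ) = 0) : prevEig lam k = 0 :=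
  dif_pos hk

theorem prevEig_of_val_succ {i k : Fin M} (h : (i : ℕ) + 1 = k) : prevEig lam k = lam i := by
  rw [prevEig, dif_neg (by omega)]
  congr
  omega

theorem prevEig_cases (k : Fin M) :
    ((k : ℕ) = 0 ∧ prevEig lam k = 0) ∨ ∃ i : Fin M, (i : ℕ) + 1 = k ∧ prevEig lam k = lam i := by
  by_cases hk : (k : ℕ) = 0
  · exact .inl ⟨hk, prevEig_of_val_eq_zero hk⟩
  · exact .inr ⟨⟨k - 1, by omega⟩, by simp; omega, prevEig_of_val_succ (by simp; omega)⟩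

theorem le_prevEig_or_le (hlam : Monotone lam) (j k : Fin M) :
    lam j ≤ prevEig lam k ∨ lam k ≤ lam j := by
  rcases prevEig_cases (lam := lam) k with ⟨hk, -⟩ | ⟨i, hik, hi⟩
  · exact .inr (hlam (Fin.le_def.2 (by omega)))
  · rw [hi]
    rcases lt_or_ge i j with h | h
    · exact .inr (hlam (Fin.le_def.2 (by rw [Fin.lt_def] at h; omega)))
    · exact .inl (hlam h)

theorem prevEig_lt (hlam : StrictMono lam) (hpos : ∀ j, 0 < lam j) (k : Fin M) :
    prevEig lam k < lam k := by
  rcases prevEig_cases (lam := lam) k with ⟨-, h⟩ | ⟨i, hik, h⟩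
  · exact h ▸ hpos k
  · exact h ▸ hlam (Fin.lt_def.2 (by omega))

theorem exists_mem_Ioo_prevEig {μ : ℝ} (hμ0 : 0 < μ) (hμ : ∀ j, μ ≠ lam j)
    (hlt : ∃ j, μ < lam j) : ∃ k, μ ∈ Ioo (prevEig lam k) (lam k) := by
  obtain ⟨k, hk, hmin⟩ := wellFounded_lt.has_min {j | μ < lam j} hlt
  refine ⟨k, ?_, hk⟩
  rcases prevEig_cases (lam := lam) k with ⟨-, h⟩ | ⟨i, hik, h⟩
  · exact h ▸ hμ0
  · have hi : ¬μ < lam i := fun hi => hmin i hi (Fin.lt_def.2 (by omega))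
    exact h ▸ lt_of_le_of_ne (not_lt.1 hi) (hμ i).symm

theorem eventually_mestreSum_lt_nhdsGT_prevEig (hlam : StrictMono lam) (hpos : ∀ j, 0 < lam j)
    {c : ℝ} (hc : (M : ℝ) < c) (k : Fin M) :
    ∀ᶠ μ in 𝓝[>] prevEig lam k, mestreSum lam μ < c := by
  rcases prevEig_cases (lam := lam) k with ⟨-, h⟩ | ⟨i, -, h⟩ <;> rw [h]
  · have h0 : mestreSum lam 0 < c := by
      rwa [mestreSum_zero fun j => (hpos j).ne', Fintype.card_fin]
    exact eventually_nhdsWithin_of_eventually_nhds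
      ((continuousAt_mestreSum fun j => (hpos j).ne').eventually_lt continuousAt_const h0)
  · exact (tendsto_mestreSum_nhdsGT hlam.injective (hpos i)).eventually_lt_atBot c

end prevEig

/-- For distinct positive eigenvalues `0 < λ₁ < … < λ_M` and `N > M`, the equation
`(1/N) ∑ⱼ λⱼ/(λⱼ − μ) = 1` has exactly one solution in each interval `(λ_{k−1}, λ_k)`
(with `λ₀ = 0`), and these `M` interlaced solutions are all of its real solutions. -/
theorem mestre_roots (M N : ℕ) (hMN : M < N) (lam : Fin M → ℝ)
    (hpos : ∀ k, 0 < lam k) (hmono : StrictMono lam) :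
    (∀ k : Fin M, ∃! μ : ℝ, μ ∈ Set.Ioo (prevEig lam k) (lam k) ∧
        (1 / (N : ℝ)) * ∑ j, lam j / (lam j - μ) = 1) ∧
      (∀ μ : ℝ, (∀ j, μ ≠ lam j) → (1 / (N : ℝ)) * ∑ j, lam j / (lam j - μ) = 1 →
        ∃ k : Fin M, μ ∈ Set.Ioo (prevEig lam k) (lam k)) := by
  have hMN' : (M : ℝ) < N := by exact_mod_cast hMN
  have hN : (0 : ℝ) < N := (Nat.cast_nonneg M).trans_lt hMN'
  have heq (μ : ℝ) : (1 / (N : ℝ)) * ∑ j, lam j / (lam j - μ) = 1 ↔ mestreSum lam μ = N := by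
    rw [one_div_mul_eq_div, div_eq_one_iff_eq hN.ne', mestreSum]
  simp only [heq]
  refine ⟨fun k => ?_, fun μ hμ hsol => ?_⟩
  · have : Nonempty (Fin M) := ⟨k⟩
    have hgap (j : Fin M) : lam j ∉ Ioo (prevEig lam k) (lam k) := fun hj =>
      (le_prevEig_or_le hmono.monotone j k).elim hj.1.not_ge hj.2.not_ge
    exact existsUnique_mem_Ioo_eq_of_strictMonoOn (prevEig_lt hmono hpos k)
      (continuousOn_mestreSum hgap) (strictMonoOn_mestreSum ordConnected_Ioo hpos hgap)
      (eventually_mestreSum_lt_nhdsGT_prevEig hmono hpos hMN' k)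
      ((tendsto_mestreSum_nhdsLT hmono.injective (hpos k)).eventually_gt_atTop _)
  · have hμ0 : 0 < μ := by
      by_contra! h
      have := mestreSum_le_card hpos h
      rw [Fintype.card_fin] at this
      linarith
    have hlt : ∃ j, μ < lam j := by
      by_contra! h
      have := mestreSum_nonpos (fun j => (hpos j).le) fun j => (h j).lt_of_ne (hμ j).symm
      linarith
    exact exists_mem_Ioo_prevEig hμ0 hμ hlt
end

section
/- Let 0 < λ₁ < … < λ_M be distinct positive reals, N > M, and let μ₁ < … < μ_M be the M real solutions of 1 = (1/N)∑_{j=1}^{M} λ_j/(λ_j − μ). Then for every k ∈ {1,…,M}: log N = ∑_{r=1}^{M} log( λ_k / |μ_r − λ_k| ) − ∑_{r≠k} log( λ_k / |λ_r − λ_k| ). -/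
open Finset Polynomial Lagrange

theorem degree_nodal_sub_nodal_lt {R ι : Type*} [CommRing R] [Nontrivial R] (s : Finset ι)
    {v w : ι → R} : (nodal s w - nodal s v).degree < #s := by
  have h := degree_sub_lt_left (p := nodal s w) (q := nodal s v)
    (by rw [degree_nodal, degree_nodal]) nodal_ne_zero (by rw [nodal_monic.leadingCoeff, nodal_monic.leadingCoeff])
  rwa [degree_nodal] at h

section Secular

variable {K ι : Type*} [Field K] [Fintype ι] [DecidableEq ι] {c v w : ι → K}

theorem eval_nodal_add_sum_smul_nodal_erase {x : K} (hx : ∀ j, x ≠ v j) :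
    (nodal univ v + ∑ j, c j • nodal (univ.erase j) v).eval x =
      (nodal univ v).eval x * (1 - ∑ j, c j / (v j - x)) := by
  have herase : ∀ j, (nodal (univ.erase j) v).eval x = (nodal univ v).eval x / (x - v j) := by
    intro j
    rw [eq_div_iff (sub_ne_zero.2 (hx j)), eval_nodal, eval_nodal, mul_comm,
      mul_prod_erase _ (fun i => x - v i) (mem_univ j)]
  simp only [eval_add, eval_finsetSum, eval_smul, herase, smul_eq_mul, mul_sub, mul_one,
    mul_sum]
  rw [sub_eq_add_neg, ← sum_neg_distrib]
  congr 1
  refine sum_congr rfl fun j _ => ?_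
  rw [← neg_sub x (v j), div_neg]
  ring

theorem degree_sum_smul_nodal_erase_lt :
    (∑ j, c j • nodal (univ.erase j) v).degree < #(univ : Finset ι) := by
  rw [← mem_degreeLT]
  refine Submodule.sum_mem _ fun j _ => Submodule.smul_mem _ _ ?_
  rw [mem_degreeLT, degree_nodal, card_erase_of_mem (mem_univ j)]
  exact_mod_cast Nat.sub_lt (Fintype.card_pos_iff.2 ⟨j⟩) one_pos

theorem nodal_eq_nodal_add_sum_smul_nodal_erase (hw : Function.Injective w)
    (hne : ∀ r j, w r ≠ v j) (hsec : ∀ r, ∑ j, c j / (v j - w r) = 1) :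
    nodal univ w = nodal univ v + ∑ j, c j • nodal (univ.erase j) v := by
  refine eq_of_degree_sub_lt_of_eval_index_eq univ hw.injOn ?_ fun r _ => ?_
  · rw [sub_add_eq_sub_sub]
    exact (degree_sub_le _ _).trans_lt
      (max_lt (degree_nodal_sub_nodal_lt univ) degree_sum_smul_nodal_erase_lt)
  · rw [eval_nodal_at_node (mem_univ r), eval_nodal_add_sum_smul_nodal_erase (hne r), hsec r,
      sub_self, mul_zero]

theorem prod_sub_eq_mul_prod_erase_sub (hw : Function.Injective w)
    (hne : ∀ r j, w r ≠ v j) (hsec : ∀ r, ∑ j, c j / (v j - w r) = 1) (k : ι) :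
    ∏ r, (v k - w r) = c k * ∏ i ∈ univ.erase k, (v k - v i) := by
  have h := congrArg (eval (v k)) (nodal_eq_nodal_add_sum_smul_nodal_erase hw hne hsec)
  rwa [eval_add, eval_nodal_at_node (mem_univ k), zero_add, eval_finsetSum,
    sum_eq_single k (fun j _ hjk => by
      rw [eval_smul, eval_nodal_at_node (mem_erase.2 ⟨Ne.symm hjk, mem_univ k⟩), smul_zero])
      (fun h => absurd (mem_univ k) h), eval_smul, eval_nodal, eval_nodal, smul_eq_mul] at h

end Secular

open Real in
theorem log_eq_sum_log_div_abs_sub {ι : Type*} [Fintype ι] [DecidableEq ι] {x y : ι → ℝ}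
    {k : ι} {N : ℝ} (hN : N ≠ 0) (hx : ∀ r, x r ≠ y k)
    (h : ∏ r, (y k - x r) = y k / N * ∏ i ∈ univ.erase k, (y k - y i)) :
    log N = ∑ r, log (y k / |x r - y k|) - ∑ i ∈ univ.erase k, log (y k / |y i - y k|) := by
  have hx' : ∀ r, |x r - y k| ≠ 0 := fun r => abs_ne_zero.2 (sub_ne_zero.2 (hx r))
  have hrhs : y k / N * ∏ i ∈ univ.erase k, (y k - y i) ≠ 0 :=
    h ▸ prod_ne_zero_iff.2 fun r _ => sub_ne_zero.2 (hx r).symm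
  obtain ⟨hyN, hy⟩ := mul_ne_zero_iff.1 hrhs
  have hyk : y k ≠ 0 := (div_ne_zero_iff.1 hyN).1
  have hy' : ∀ i ∈ univ.erase k, |y i - y k| ≠ 0 := fun i hi =>
    abs_ne_zero.2 (sub_ne_zero.2 fun hik => prod_ne_zero_iff.1 hy i hi (by rw [hik, sub_self]))
  have hlog : ∑ r, log |x r - y k| = log (y k) - log N + ∑ i ∈ univ.erase k, log |y i - y k| := by
    have habs := congrArg (fun t => log |t|) h
    simp only [abs_mul, abs_prod, abs_sub_comm (y k)] at habs
    rwa [log_prod fun r _ => hx' r, log_mul (abs_ne_zero.2 hyN) (prod_ne_zero_iff.2 hy'),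
      log_abs, log_div hyk hN, log_prod hy'] at habs
  have hconst : ∑ _r : ι, log (y k) = log (y k) + ∑ _i ∈ univ.erase k, log (y k) :=
    (add_sum_erase _ _ (mem_univ k)).symm
  rw [sum_congr rfl fun r _ => log_div hyk (hx' r),
    sum_congr rfl fun i hi => log_div hyk (hy' i hi), sum_sub_distrib, sum_sub_distrib, hconst]
  linarith

theorem le_prevEig {M : ℕ} {lam : Fin M → ℝ} (hlam : Monotone lam) {j k : Fin M} (hjk : j < k) :
    lam j ≤ prevEig lam k := by
  rw [prevEig, dif_neg (by omega)]
  exact hlam (Fin.le_def.2 (Nat.le_sub_one_of_lt hjk))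

section Interlacing

variable {M : ℕ} {lam mu : Fin M → ℝ} (hlam : Monotone lam)
  (hmu : ∀ k, mu k ∈ Set.Ioo (prevEig lam k) (lam k))
include hlam hmu

theorem strictMono_of_mem_Ioo_prevEig : StrictMono mu := fun _ _ hab =>
  (hmu _).2.trans ((le_prevEig hlam hab).trans_lt (hmu _).1)

theorem ne_of_mem_Ioo_prevEig (r j : Fin M) : mu r ≠ lam j := by
  rcases lt_or_ge j r with h | h
  · exact ((le_prevEig hlam h).trans_lt (hmu r).1).ne'
  · exact ((hmu r).2.trans_le (hlam h)).ne

end Interlacing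

theorem log_N_identity_general (M N : ℕ) (lam : Fin M → ℝ)
    (hmono : StrictMono lam) (mu : Fin M → ℝ)
    (hloc : ∀ k, mu k ∈ Set.Ioo (prevEig lam k) (lam k))
    (heq : ∀ k, (1 / (N : ℝ)) * ∑ j, lam j / (lam j - mu k) = 1) :
    ∀ k : Fin M, Real.log N =
      (∑ r, Real.log (lam k / |mu r - lam k|)) -
        ∑ r ∈ Finset.univ.erase k, Real.log (lam k / |lam r - lam k|) := by
  intro k
  have hN : (N : ℝ) ≠ 0 := fun hN => by simpa [hN] using heq k
  have hne := ne_of_mem_Ioo_prevEig hmono.monotone hloc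
  have hsec : ∀ r, ∑ j, lam j / N / (lam j - mu r) = 1 := fun r => by
    rw [← heq r, mul_sum]
    exact sum_congr rfl fun j _ => by ring
  exact log_eq_sum_log_div_abs_sub hN (fun r => hne r k) <| prod_sub_eq_mul_prod_erase_sub
    (strictMono_of_mem_Ioo_prevEig hmono.monotone hloc).injective hne hsec k

/-- If `μ₁ < … < μ_M` are the `M` real solutions of `1 = (1/N) ∑ⱼ λⱼ/(λⱼ − μ)`, then for
every `k`, `log N = ∑ᵣ log(λₖ/|μᵣ − λₖ|) − ∑_{r≠k} log(λₖ/|λᵣ − λₖ|)`. -/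
theorem log_N_identity (M N : ℕ) (hMN : M < N) (lam : Fin M → ℝ)
    (hpos : ∀ k, 0 < lam k) (hmono : StrictMono lam) (mu : Fin M → ℝ)
    (hloc : ∀ k, mu k ∈ Set.Ioo (prevEig lam k) (lam k))
    (heq : ∀ k, (1 / (N : ℝ)) * ∑ j, lam j / (lam j - mu k) = 1) :
    ∀ k : Fin M, Real.log N =
      (∑ r, Real.log (lam k / |mu r - lam k|)) -
        ∑ r ∈ Finset.univ.erase k, Real.log (lam k / |lam r - lam k|) :=
  log_N_identity_general M N lam hmono mu hloc heq
end
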